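/- arXiv:2211.08603 — 3 statements merged into one kernel-verified Lean document; each statement's English description precedes it below -/
import Mathlib

section
/- Let σ ∈ (0,1), δ ∈ (0,1), μ_ξ > 0 and c > 0, and let (y_k)_{k∈ℕ} be a nonnegative real sequence satisfying y_{k+1} ≤ σ·y_k + μ_ξ/(k+1)^δ + c for all k ∈ ℕ. Let t̄ ∈ ℕ be any integer with |ln σ| − δ/(t̄+1) > 0 (e.g. t̄ = max{0, ⌈δ/|ln σ| − 1⌉·2} works). Then for all k ∈ ℕ, y_{k+1} ≤ W₁·σ^{k+1} + W₂/(k+1)^δ + W₃, where W₁ = y₀ + μ_ξ·Σ_{t=0}^{t̄−1} σ^{−(t+1)}/(t+1)^δ, W₂ = σ^{−1}·μ_ξ·(|ln σ| − δ/(t̄+1))^{−1}, and W₃ = c/(1−σ). -/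
open Finset Real

/-!
Unrolling the recursion gives
`y (k+1) ≤ σ^(k+1) y 0 + μξ σ^(k+1) ∑_{t ≤ k} w t + c ∑_{t ≤ k} σ^(k-t)` with
`w t = forcingWeight σ δ t = σ^(-(t+1)) / (t+1)^δ`. As `log (1 + 1/(t+1)) ≤ 1/(t+1)`, beyond
`tbar` the weights grow geometrically, `w (t+1) ≥ exp A * w t ≥ (1 + A) w t` with
`A = |log σ| - δ/(tbar+1) > 0`, so the tail `∑_{tbar ≤ t ≤ k} w t` telescopes to at most
`w (k+1) / A`, and `σ^(k+1) w (k+1)` is `σ⁻¹ / (k+2)^δ`. The geometric sum is at most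
`1 / (1 - σ)`.
-/

theorem le_pow_mul_add_sum_of_le_mul_add {σ : ℝ} (hσ : 0 ≤ σ) {y b : ℕ → ℝ}
    (h : ∀ k, y (k + 1) ≤ σ * y k + b k) (k : ℕ) :
    y (k + 1) ≤ σ ^ (k + 1) * y 0 + ∑ t ∈ range (k + 1), σ ^ (k - t) * b t := by
  induction k with
  | zero => simpa using h 0
  | succ k ih =>
    have hshift : σ * ∑ t ∈ range (k + 1), σ ^ (k - t) * b t
        = ∑ t ∈ range (k + 1), σ ^ (k + 1 - t) * b t := by
      rw [mul_sum]
      refine sum_congr rfl fun t ht => ?_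
      rw [Nat.sub_add_comm (Nat.lt_succ_iff.mp (mem_range.mp ht)), pow_succ]
      ring
    calc y (k + 1 + 1) ≤ σ * y (k + 1) + b (k + 1) := h (k + 1)
      _ ≤ σ * (σ ^ (k + 1) * y 0 + ∑ t ∈ range (k + 1), σ ^ (k - t) * b t) + b (k + 1) :=
          by gcongr
      _ = σ ^ (k + 1 + 1) * y 0 + ∑ t ∈ range (k + 1 + 1), σ ^ (k + 1 - t) * b t := by
          rw [sum_range_succ _ (k + 1), mul_add, hshift, Nat.sub_self, pow_zero, one_mul,
            pow_succ σ (k + 1)]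
          ring

theorem sum_range_pow_sub_le_one_div_one_sub {σ : ℝ} (h0 : 0 ≤ σ) (h1 : σ < 1) (k : ℕ) :
    ∑ t ∈ range (k + 1), σ ^ (k - t) ≤ 1 / (1 - σ) := by
  have := sum_range_reflect (σ ^ ·) (k + 1)
  simp only [Nat.add_sub_cancel] at this
  rw [this, range_eq_Ico]
  simpa using geom_sum_Ico_le_of_lt_one h0 h1 (m := 0) (n := k + 1)

section Growth

variable {F : ℕ → ℝ} {A : ℝ} {m : ℕ}

theorem mul_sum_Ico_le_sub_of_growth (h : ∀ t, m ≤ t → A * F t ≤ F (t + 1) - F t)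
    {n : ℕ} (hmn : m ≤ n) : A * ∑ t ∈ Ico m n, F t ≤ F n - F m := by
  induction n, hmn using Nat.le_induction with
  | base => simp
  | succ n hmn ih =>
    rw [sum_Ico_succ_top hmn, mul_add]
    linarith [h n hmn]

theorem sum_Ico_le_div_of_growth (hA : 0 < A) (hF : ∀ t, 0 ≤ F t)
    (h : ∀ t, m ≤ t → A * F t ≤ F (t + 1) - F t) (n : ℕ) :
    ∑ t ∈ Ico m n, F t ≤ F n / A := by
  rcases le_or_gt m n with hmn | hnm
  · rw [le_div_iff₀ hA, mul_comm]
    linarith [mul_sum_Ico_le_sub_of_growth h hmn, hF m]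
  · rw [Ico_eq_empty_of_le hnm.le, sum_empty]
    exact div_nonneg (hF n) hA.le

theorem sum_range_le_sum_range_add_sum_Ico (hF : ∀ t, 0 ≤ F t) (m n : ℕ) :
    ∑ t ∈ range n, F t ≤ ∑ t ∈ range m, F t + ∑ t ∈ Ico m n, F t := by
  rcases le_or_gt m n with hmn | hnm
  · exact (sum_range_add_sum_Ico F hmn).ge
  · rw [Ico_eq_empty_of_le hnm.le, sum_empty, add_zero]
    exact sum_le_sum_of_subset_of_nonneg (range_subset_range.mpr hnm.le) fun t _ _ => hF t

end Growth

theorem one_sub_log_sub_div_le_inv_mul_rpow {σ δ x : ℝ} (hσ : 0 < σ) (hδ : 0 ≤ δ)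
    (hx : 0 < x) :
    1 - log σ - δ / x ≤ σ⁻¹ * (x / (x + 1)) ^ δ := by
  have hlog : -(1 / x) ≤ log (x / (x + 1)) := by
    have h := one_sub_inv_le_log_of_pos (show 0 < x / (x + 1) by positivity)
    have h' : 1 - (x / (x + 1))⁻¹ = -(1 / x) := by field_simp; ring
    rwa [h'] at h
  calc 1 - log σ - δ / x ≤ exp (-log σ - δ / x) := by
        linarith [add_one_le_exp (-log σ - δ / x)]
    _ ≤ exp (-log σ + δ * log (x / (x + 1))) := by
        have := mul_le_mul_of_nonneg_left hlog hδ
        rw [mul_neg, mul_one_div] at this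
        exact exp_le_exp.mpr (by linarith)
    _ = σ⁻¹ * (x / (x + 1)) ^ δ := by
        rw [exp_add, ← log_inv, exp_log (inv_pos.mpr hσ), rpow_def_of_pos (by positivity)]
        ring_nf

noncomputable def forcingWeight (σ δ : ℝ) (t : ℕ) : ℝ :=
  σ ^ (-((t : ℝ) + 1)) / ((t : ℝ) + 1) ^ δ

section forcingWeight

variable {σ : ℝ} (δ : ℝ)

theorem forcingWeight_pos (hσ : 0 < σ) (t : ℕ) : 0 < forcingWeight σ δ t := by
  unfold forcingWeight
  positivity

theorem forcingWeight_succ (hσ : 0 < σ) (t : ℕ) :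
    forcingWeight σ δ (t + 1)
      = σ⁻¹ * (((t : ℝ) + 1) / ((t : ℝ) + 1 + 1)) ^ δ * forcingWeight σ δ t := by
  unfold forcingWeight
  push_cast
  rw [div_rpow (by positivity) (by positivity),
    show -((t : ℝ) + 1 + 1) = -1 + -((t : ℝ) + 1) by ring, rpow_add hσ, rpow_neg_one]
  field_simp

theorem pow_mul_forcingWeight {k t : ℕ} (hσ : 0 < σ) (ht : t ≤ k) :
    σ ^ (k + 1) * forcingWeight σ δ t = σ ^ (k - t) / ((t : ℝ) + 1) ^ δ := by
  unfold forcingWeight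
  rw [← mul_div_assoc, ← rpow_natCast, ← rpow_natCast, ← rpow_add hσ]
  push_cast [ht]
  ring_nf

theorem pow_mul_forcingWeight_succ_le (hσ : 0 < σ) (hδ : 0 ≤ δ) (k : ℕ) :
    σ ^ (k + 1) * forcingWeight σ δ (k + 1) ≤ σ⁻¹ / ((k : ℝ) + 1) ^ δ := by
  have hpow : σ ^ (k + 1) * forcingWeight σ δ (k + 1) = σ⁻¹ / ((k : ℝ) + 1 + 1) ^ δ := by
    unfold forcingWeight
    rw [← mul_div_assoc, ← rpow_natCast, ← rpow_add hσ, ← rpow_neg_one]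
    push_cast
    ring_nf
  rw [hpow]
  gcongr
  linarith

theorem neg_log_sub_div_mul_forcingWeight_le (hσ : 0 < σ) (hδ : 0 ≤ δ) (t : ℕ) :
    (-log σ - δ / ((t : ℝ) + 1)) * forcingWeight σ δ t
      ≤ forcingWeight σ δ (t + 1) - forcingWeight σ δ t := by
  have h := mul_le_mul_of_nonneg_right
    (one_sub_log_sub_div_le_inv_mul_rpow hσ hδ (x := (t : ℝ) + 1) (by positivity))
    (forcingWeight_pos δ hσ t).le
  rw [forcingWeight_succ δ hσ]
  linarith

end forcingWeight

theorem pow_mul_sum_forcingWeight_le {σ δ : ℝ} (hσ : σ ∈ Set.Ioo (0 : ℝ) 1) (hδ : 0 ≤ δ)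
    {tbar : ℕ} (htbar : 0 < |log σ| - δ / ((tbar : ℝ) + 1)) (k : ℕ) :
    σ ^ (k + 1) * ∑ t ∈ range (k + 1), forcingWeight σ δ t
      ≤ σ ^ (k + 1) * ∑ t ∈ range tbar, forcingWeight σ δ t
        + σ⁻¹ * (|log σ| - δ / ((tbar : ℝ) + 1))⁻¹ / ((k : ℝ) + 1) ^ δ := by
  have hw := forcingWeight_pos δ hσ.1
  have hσk : 0 ≤ σ ^ (k + 1) := pow_nonneg hσ.1.le _
  have hgrowth : ∀ t, tbar ≤ t → (|log σ| - δ / ((tbar : ℝ) + 1)) * forcingWeight σ δ t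
      ≤ forcingWeight σ δ (t + 1) - forcingWeight σ δ t := by
    intro t ht
    have hA : |log σ| - δ / ((tbar : ℝ) + 1) ≤ -log σ - δ / ((t : ℝ) + 1) := by
      rw [abs_of_neg (log_neg hσ.1 hσ.2)]
      gcongr
    exact (mul_le_mul_of_nonneg_right hA (hw t).le).trans
      (neg_log_sub_div_mul_forcingWeight_le δ hσ.1 hδ t)
  set A := |log σ| - δ / ((tbar : ℝ) + 1)
  have htail : σ ^ (k + 1) * ∑ t ∈ Ico tbar (k + 1), forcingWeight σ δ t
      ≤ σ⁻¹ * A⁻¹ / ((k : ℝ) + 1) ^ δ :=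
    calc σ ^ (k + 1) * ∑ t ∈ Ico tbar (k + 1), forcingWeight σ δ t
        ≤ σ ^ (k + 1) * (forcingWeight σ δ (k + 1) / A) :=
          mul_le_mul_of_nonneg_left
            (sum_Ico_le_div_of_growth htbar (fun t => (hw t).le) hgrowth (k + 1)) hσk
      _ = σ ^ (k + 1) * forcingWeight σ δ (k + 1) / A := by ring
      _ ≤ σ⁻¹ / ((k : ℝ) + 1) ^ δ / A := by
          gcongr
          exact pow_mul_forcingWeight_succ_le δ hσ.1 hδ k
      _ = σ⁻¹ * A⁻¹ / ((k : ℝ) + 1) ^ δ := by ring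
  calc σ ^ (k + 1) * ∑ t ∈ range (k + 1), forcingWeight σ δ t
      ≤ σ ^ (k + 1) * (∑ t ∈ range tbar, forcingWeight σ δ t
          + ∑ t ∈ Ico tbar (k + 1), forcingWeight σ δ t) :=
        mul_le_mul_of_nonneg_left
          (sum_range_le_sum_range_add_sum_Ico (fun t => (hw t).le) tbar (k + 1)) hσk
    _ ≤ _ := by linarith

theorem stmt_0_general
    (σ δ μξ c : ℝ) (hσ : σ ∈ Set.Ioo (0:ℝ) 1) (hδ : δ ∈ Set.Ioo (0:ℝ) 1)
    (hμ : 0 < μξ) (hc : 0 < c)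
    (y : ℕ → ℝ)
    (hrec : ∀ k : ℕ, y (k + 1) ≤ σ * y k + μξ / ((k : ℝ) + 1) ^ δ + c)
    (tbar : ℕ) (htbar : 0 < |Real.log σ| - δ / ((tbar : ℝ) + 1)) :
    ∀ k : ℕ,
      y (k + 1) ≤
        (y 0 + μξ * ∑ t ∈ Finset.range tbar, σ ^ (-((t : ℝ) + 1)) / ((t : ℝ) + 1) ^ δ)
            * σ ^ (k + 1)
          + (σ⁻¹ * μξ * (|Real.log σ| - δ / ((tbar : ℝ) + 1))⁻¹) / ((k : ℝ) + 1) ^ δ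
          + c / (1 - σ) := by
  intro k
  have hunrolled := le_pow_mul_add_sum_of_le_mul_add hσ.1.le
    (fun k => (hrec k).trans_eq (add_assoc _ _ _)) k
  have hsplit : ∑ t ∈ range (k + 1), σ ^ (k - t) * (μξ / ((t : ℝ) + 1) ^ δ + c)
      = μξ * (σ ^ (k + 1) * ∑ t ∈ range (k + 1), forcingWeight σ δ t)
        + c * ∑ t ∈ range (k + 1), σ ^ (k - t) := by
    simp only [mul_sum, ← sum_add_distrib]
    refine sum_congr rfl fun t ht => ?_
    rw [pow_mul_forcingWeight δ hσ.1 (Nat.lt_succ_iff.mp (mem_range.mp ht))]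
    ring
  rw [hsplit] at hunrolled
  calc y (k + 1) ≤ _ := hunrolled
    _ ≤ σ ^ (k + 1) * y 0 + (μξ * (σ ^ (k + 1) * ∑ t ∈ range tbar, forcingWeight σ δ t
          + σ⁻¹ * (|log σ| - δ / ((tbar : ℝ) + 1))⁻¹ / ((k : ℝ) + 1) ^ δ)
          + c * (1 / (1 - σ))) := by
        gcongr
        · exact pow_mul_sum_forcingWeight_le hσ hδ.1.le htbar k
        · exact sum_range_pow_sub_le_one_div_one_sub hσ.1.le hσ.2 k
    _ = _ := by
        unfold forcingWeight
        ring

/-- Lemma 1 of the paper: decay estimate for a nonnegative sequence driven by a linear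
contraction, a polynomially decaying forcing term and a constant forcing term. -/
theorem stmt_0
    (σ δ μξ c : ℝ) (hσ : σ ∈ Set.Ioo (0:ℝ) 1) (hδ : δ ∈ Set.Ioo (0:ℝ) 1)
    (hμ : 0 < μξ) (hc : 0 < c)
    (y : ℕ → ℝ) (hy : ∀ k, 0 ≤ y k)
    (hrec : ∀ k : ℕ, y (k + 1) ≤ σ * y k + μξ / ((k : ℝ) + 1) ^ δ + c)
    (tbar : ℕ) (htbar : 0 < |Real.log σ| - δ / ((tbar : ℝ) + 1)) :
    ∀ k : ℕ,
      y (k + 1) ≤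
        (y 0 + μξ * ∑ t ∈ Finset.range tbar, σ ^ (-((t : ℝ) + 1)) / ((t : ℝ) + 1) ^ δ)
            * σ ^ (k + 1)
          + (σ⁻¹ * μξ * (|Real.log σ| - δ / ((tbar : ℝ) + 1))⁻¹) / ((k : ℝ) + 1) ^ δ
          + c / (1 - σ) :=
  stmt_0_general σ δ μξ c hσ hδ hμ hc y hrec tbar htbar
end

section
/- Let q ∈ (0,1), λ ∈ (0,1) with √λ ≠ q, δ ∈ (0,1), C, ν, Y₁, Y₂ ≥ 0, and let (F_k)_{k∈ℕ} be a nonnegative real sequence satisfying F_{k+1} ≤ q·F_k + C·(Y₁·(√λ)^{k+1} + Y₂/(k+1)^δ) + ν for all k ∈ ℕ. Let t̄ ∈ ℕ be any integer with |ln q| − δ/(t̄+1) > 0. Then for all k ∈ ℕ, F_{k+1} ≤ (F₀ + C·Y₂·Σ_{ℓ=0}^{t̄−1} q^{−(ℓ+1)}/(ℓ+1)^δ)·q^{k+1} + (C·Y₁·√λ/|√λ − q|)·max(√λ, q)^{k+1} + C·Y₂·q^{−1}·(|ln q| − δ/(t̄+1))^{−1}/(k+1)^δ + ν/(1−q). 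-/
/-!
Unrolling the recursion bounds `F (k + 1)` by `q ^ (k + 1) * F 0` plus the convolution of
`q ^ (k - j)` with the forcing term. Its `√λ`-part is the two-ratio geometric sum
`∑ s ^ j q ^ (k - j) = (s ^ (k + 1) - q ^ (k + 1)) / (s - q)`, its `ν`-part a geometric series.
For the `(j + 1) ^ (-δ)`-part, split at `tbar`: the first `tbar` terms are a fixed multiple of
`q ^ (k + 1)`, while for `j ≥ tbar` one has
`((k + 1) / (j + 1)) ^ δ ≤ exp (δ (k - j) / (tbar + 1))`, so the tail is `(k + 1) ^ (-δ)` times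
a geometric series of ratio `r = q exp (δ / (tbar + 1)) < 1`, and
`(1 - r)⁻¹ ≤ r⁻¹ / (-log r) ≤ q⁻¹ / (|log q| - δ / (tbar + 1))`.
-/

open Finset Real

section Unrolling

variable {R : Type*} [CommSemiring R] [PartialOrder R] [IsOrderedRing R]

theorem le_pow_mul_add_sum_of_le_mul_add_s2 {F G : ℕ → R} {q : R} (hq : 0 ≤ q)
    (hrec : ∀ k, F (k + 1) ≤ q * F k + G k) (k : ℕ) :
    F (k + 1) ≤ q ^ (k + 1) * F 0 + ∑ j ∈ range (k + 1), q ^ (k - j) * G j := by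
  induction k with
  | zero => simpa using hrec 0
  | succ k ih =>
    have hsum : ∑ j ∈ range (k + 2), q ^ (k + 1 - j) * G j
        = q * ∑ j ∈ range (k + 1), q ^ (k - j) * G j + G (k + 1) := by
      rw [sum_range_succ, mul_sum, Nat.sub_self, pow_zero, one_mul]
      congr 1
      refine sum_congr rfl fun j hj => ?_
      rw [Nat.sub_add_comm (Nat.lt_succ_iff.mp (mem_range.mp hj)), pow_succ', mul_assoc]
    calc F (k + 2) ≤ q * F (k + 1) + G (k + 1) := hrec (k + 1)
      _ ≤ q * (q ^ (k + 1) * F 0 + ∑ j ∈ range (k + 1), q ^ (k - j) * G j) + G (k + 1) := by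
        gcongr
      _ = q ^ (k + 2) * F 0 + ∑ j ∈ range (k + 2), q ^ (k + 1 - j) * G j := by
        rw [hsum]; ring

end Unrolling

section GeometricSums

variable {K : Type*} [Field K] [LinearOrder K] [IsStrictOrderedRing K]

theorem sum_pow_mul_pow_sub_le_max_pow_div {s q : K} (hs : 0 ≤ s) (hq : 0 ≤ q) (hne : s ≠ q)
    (k : ℕ) :
    ∑ j ∈ range (k + 1), s ^ j * q ^ (k - j) ≤ max s q ^ (k + 1) / |s - q| := by
  have hsum := geom₂_sum hne (k + 1)
  rw [Nat.add_sub_cancel] at hsum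
  rw [hsum]
  calc (s ^ (k + 1) - q ^ (k + 1)) / (s - q)
      ≤ |s ^ (k + 1) - q ^ (k + 1)| / |s - q| := by rw [← abs_div]; exact le_abs_self _
    _ ≤ max s q ^ (k + 1) / |s - q| := by
      gcongr
      exact abs_sub_le_of_nonneg_of_le (by positivity)
        (pow_le_pow_left₀ hs (le_max_left _ _) _) (by positivity)
        (pow_le_pow_left₀ hq (le_max_right _ _) _)

theorem sum_range_pow_sub_le_inv_one_sub {r : K} (h0 : 0 ≤ r) (h1 : r < 1) (k : ℕ) :
    ∑ j ∈ range (k + 1), r ^ (k - j) ≤ (1 - r)⁻¹ := by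
  have hreflect := sum_range_reflect (r ^ ·) (k + 1)
  rw [Nat.add_sub_cancel] at hreflect
  rw [hreflect, range_eq_Ico]
  simpa using geom_sum_Ico_le_of_lt_one (m := 0) (n := k + 1) h0 h1

end GeometricSums

theorem inv_one_sub_le_inv_div_neg_log {r : ℝ} (h0 : 0 < r) (h1 : r < 1) :
    (1 - r)⁻¹ ≤ r⁻¹ / -log r := by
  have hkey : r * -log r ≤ 1 - r := by
    nlinarith [one_sub_inv_le_log_of_pos h0, mul_inv_cancel₀ h0.ne']
  rw [div_eq_mul_inv, ← mul_inv]
  exact inv_anti₀ (mul_pos h0 (neg_pos.mpr (log_neg h0 h1))) hkey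

theorem pow_sub_eq_rpow_neg_mul_pow {q : ℝ} (hq : 0 < q) {j k : ℕ} (hjk : j ≤ k) :
    q ^ (k - j) = q ^ (-((j : ℝ) + 1)) * q ^ (k + 1) := by
  rw [← rpow_natCast, ← rpow_natCast, ← rpow_add hq, Nat.cast_sub hjk]
  push_cast
  ring_nf

theorem sum_filter_lt_pow_sub_div_rpow_le {q : ℝ} (hq : 0 < q) (δ : ℝ) (tbar k : ℕ) :
    ∑ j ∈ range (k + 1) with j < tbar, q ^ (k - j) / ((j : ℝ) + 1) ^ δ
      ≤ (∑ l ∈ range tbar, q ^ (-((l : ℝ) + 1)) / ((l : ℝ) + 1) ^ δ) * q ^ (k + 1) := by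
  calc ∑ j ∈ range (k + 1) with j < tbar, q ^ (k - j) / ((j : ℝ) + 1) ^ δ
      = ∑ j ∈ range (k + 1) with j < tbar, q ^ (-((j : ℝ) + 1)) / ((j : ℝ) + 1) ^ δ
          * q ^ (k + 1) := by
        refine sum_congr rfl fun j hj => ?_
        rw [pow_sub_eq_rpow_neg_mul_pow hq (Nat.lt_succ_iff.mp (mem_range.mp (mem_filter.mp hj).1))]
        ring
    _ ≤ ∑ l ∈ range tbar, q ^ (-((l : ℝ) + 1)) / ((l : ℝ) + 1) ^ δ * q ^ (k + 1) := by
        refine sum_le_sum_of_subset_of_nonneg (fun j hj => mem_range.mpr (mem_filter.mp hj).2) ?_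
        intro j _ _
        positivity
    _ = _ := (sum_mul _ _ _).symm

theorem natCast_add_add_one_rpow_le {δ : ℝ} (hδ : 0 ≤ δ) {tbar j : ℕ} (hj : tbar ≤ j) (i : ℕ) :
    (((j + i : ℕ) : ℝ) + 1) ^ δ ≤ ((j : ℝ) + 1) ^ δ * exp (δ / ((tbar : ℝ) + 1)) ^ i := by
  have hj1 : (0 : ℝ) < (j : ℝ) + 1 := by positivity
  have hbase : ((j + i : ℕ) : ℝ) + 1 ≤ ((j : ℝ) + 1) * exp (i / ((tbar : ℝ) + 1)) := by
    calc ((j + i : ℕ) : ℝ) + 1 = ((j : ℝ) + 1) * (i / ((j : ℝ) + 1) + 1) := by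
          push_cast; field_simp; ring
      _ ≤ ((j : ℝ) + 1) * exp (i / ((j : ℝ) + 1)) := by gcongr; exact add_one_le_exp _
      _ ≤ ((j : ℝ) + 1) * exp (i / ((tbar : ℝ) + 1)) := by gcongr
  calc (((j + i : ℕ) : ℝ) + 1) ^ δ
      ≤ (((j : ℝ) + 1) * exp (i / ((tbar : ℝ) + 1))) ^ δ := rpow_le_rpow (by positivity) hbase hδ
    _ = ((j : ℝ) + 1) ^ δ * exp (δ / ((tbar : ℝ) + 1)) ^ i := by
      rw [mul_rpow hj1.le (exp_pos _).le, ← exp_mul, ← exp_nat_mul]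
      ring_nf

theorem pow_sub_div_rpow_le {q δ : ℝ} (hq : 0 < q) (hδ : 0 ≤ δ) {tbar j k : ℕ} (hj : tbar ≤ j)
    (hjk : j ≤ k) :
    q ^ (k - j) / ((j : ℝ) + 1) ^ δ
      ≤ (q * exp (δ / ((tbar : ℝ) + 1))) ^ (k - j) / ((k : ℝ) + 1) ^ δ := by
  obtain ⟨i, rfl⟩ := Nat.exists_eq_add_of_le hjk
  rw [Nat.add_sub_cancel_left, div_le_div_iff₀ (by positivity) (by positivity), mul_pow, mul_assoc]
  gcongr
  exact (natCast_add_add_one_rpow_le hδ hj i).trans_eq (mul_comm _ _)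

theorem sum_filter_not_lt_pow_sub_div_rpow_le {q δ : ℝ} (hq : 0 < q) (hδ : 0 ≤ δ) {tbar : ℕ}
    (hr : q * exp (δ / ((tbar : ℝ) + 1)) < 1) (k : ℕ) :
    ∑ j ∈ range (k + 1) with ¬j < tbar, q ^ (k - j) / ((j : ℝ) + 1) ^ δ
      ≤ (1 - q * exp (δ / ((tbar : ℝ) + 1)))⁻¹ / ((k : ℝ) + 1) ^ δ := by
  set r := q * exp (δ / ((tbar : ℝ) + 1))
  calc ∑ j ∈ range (k + 1) with ¬j < tbar, q ^ (k - j) / ((j : ℝ) + 1) ^ δ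
      ≤ ∑ j ∈ range (k + 1) with ¬j < tbar, r ^ (k - j) / ((k : ℝ) + 1) ^ δ := by
        refine sum_le_sum fun j hj => ?_
        obtain ⟨hjk, htj⟩ := mem_filter.mp hj
        exact pow_sub_div_rpow_le hq hδ (not_lt.mp htj) (Nat.lt_succ_iff.mp (mem_range.mp hjk))
    _ ≤ ∑ j ∈ range (k + 1), r ^ (k - j) / ((k : ℝ) + 1) ^ δ :=
        sum_le_sum_of_subset_of_nonneg (filter_subset _ _) fun _ _ _ => by positivity
    _ ≤ (1 - r)⁻¹ / ((k : ℝ) + 1) ^ δ := by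
        rw [← sum_div]
        gcongr
        exact sum_range_pow_sub_le_inv_one_sub (by positivity) hr k

theorem sum_pow_sub_div_rpow_le {q δ : ℝ} (hq : q ∈ Set.Ioo (0 : ℝ) 1) (hδ : 0 ≤ δ) {tbar : ℕ}
    (htbar : 0 < |log q| - δ / ((tbar : ℝ) + 1)) (k : ℕ) :
    ∑ j ∈ range (k + 1), q ^ (k - j) / ((j : ℝ) + 1) ^ δ
      ≤ (∑ l ∈ range tbar, q ^ (-((l : ℝ) + 1)) / ((l : ℝ) + 1) ^ δ) * q ^ (k + 1)
        + q⁻¹ * (|log q| - δ / ((tbar : ℝ) + 1))⁻¹ / ((k : ℝ) + 1) ^ δ := by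
  obtain ⟨hq0, hq1⟩ := hq
  set ε := δ / ((tbar : ℝ) + 1)
  set r := q * exp ε
  have hε : 0 ≤ ε := by positivity
  have hlog_r : -log r = |log q| - ε := by
    rw [log_mul hq0.ne' (exp_pos ε).ne', log_exp, abs_of_neg (log_neg hq0 hq1)]
    ring
  have hr0 : 0 < r := by positivity
  have hr1 : r < 1 := (log_neg_iff hr0).mp (by linarith)
  have hr_inv : r⁻¹ ≤ q⁻¹ := inv_anti₀ hq0 (le_mul_of_one_le_right hq0.le (one_le_exp hε))
  have hconst : (1 - r)⁻¹ ≤ q⁻¹ * (|log q| - ε)⁻¹ := by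
    calc (1 - r)⁻¹ ≤ r⁻¹ / -log r := inv_one_sub_le_inv_div_neg_log hr0 hr1
      _ ≤ q⁻¹ * (|log q| - ε)⁻¹ := by rw [hlog_r, div_eq_mul_inv]; gcongr
  rw [← sum_filter_add_sum_filter_not _ (· < tbar)]
  gcongr
  · exact sum_filter_lt_pow_sub_div_rpow_le hq0 δ tbar k
  · exact (sum_filter_not_lt_pow_sub_div_rpow_le hq0 hδ hr1 k).trans (by gcongr)

theorem stmt_2_general
    (q lam δ C ν Y₁ Y₂ : ℝ)
    (hq : q ∈ Set.Ioo (0:ℝ) 1)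
    (hne : Real.sqrt lam ≠ q) (hδ : δ ∈ Set.Ioo (0:ℝ) 1)
    (hC : 0 ≤ C) (hν : 0 ≤ ν) (hY₁ : 0 ≤ Y₁) (hY₂ : 0 ≤ Y₂)
    (F : ℕ → ℝ)
    (hrec : ∀ k : ℕ,
      F (k + 1) ≤ q * F k
        + C * (Y₁ * (Real.sqrt lam) ^ (k + 1) + Y₂ / ((k : ℝ) + 1) ^ δ) + ν)
    (tbar : ℕ) (htbar : 0 < |Real.log q| - δ / ((tbar : ℝ) + 1)) :
    ∀ k : ℕ,
      F (k + 1) ≤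
        (F 0 + C * Y₂ * ∑ l ∈ Finset.range tbar, q ^ (-((l : ℝ) + 1)) / ((l : ℝ) + 1) ^ δ)
            * q ^ (k + 1)
          + (C * Y₁ * Real.sqrt lam / |Real.sqrt lam - q|) * (max (Real.sqrt lam) q) ^ (k + 1)
          + (C * Y₂ * q⁻¹ * (|Real.log q| - δ / ((tbar : ℝ) + 1))⁻¹) / ((k : ℝ) + 1) ^ δ
          + ν / (1 - q) := by
  intro k
  set s := √lam
  have hunroll :=
    le_pow_mul_add_sum_of_le_mul_add_s2 hq.1.le (fun k => (hrec k).trans_eq (add_assoc _ _ _)) k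
  have hforcing : ∑ j ∈ range (k + 1),
        q ^ (k - j) * (C * (Y₁ * s ^ (j + 1) + Y₂ / ((j : ℝ) + 1) ^ δ) + ν)
      = C * Y₁ * s * ∑ j ∈ range (k + 1), s ^ j * q ^ (k - j)
        + C * Y₂ * ∑ j ∈ range (k + 1), q ^ (k - j) / ((j : ℝ) + 1) ^ δ
        + ν * ∑ j ∈ range (k + 1), q ^ (k - j) := by
    simp only [mul_sum, ← sum_add_distrib]
    exact sum_congr rfl fun j _ => by ring
  have hCY₁s : 0 ≤ C * Y₁ * s := by positivity
  have hCY₂ : 0 ≤ C * Y₂ := by positivity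
  calc F (k + 1) ≤ q ^ (k + 1) * F 0 + (C * Y₁ * s * ∑ j ∈ range (k + 1), s ^ j * q ^ (k - j)
        + C * Y₂ * ∑ j ∈ range (k + 1), q ^ (k - j) / ((j : ℝ) + 1) ^ δ
        + ν * ∑ j ∈ range (k + 1), q ^ (k - j)) := hforcing ▸ hunroll
    _ ≤ q ^ (k + 1) * F 0 + (C * Y₁ * s * (max s q ^ (k + 1) / |s - q|)
        + C * Y₂ * ((∑ l ∈ range tbar, q ^ (-((l : ℝ) + 1)) / ((l : ℝ) + 1) ^ δ) * q ^ (k + 1)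
          + q⁻¹ * (|log q| - δ / ((tbar : ℝ) + 1))⁻¹ / ((k : ℝ) + 1) ^ δ)
        + ν * (1 - q)⁻¹) := by
      gcongr
      · exact sum_pow_mul_pow_sub_le_max_pow_div (sqrt_nonneg lam) hq.1.le hne k
      · exact sum_pow_sub_div_rpow_le hq hδ.1.le htbar k
      · exact sum_range_pow_sub_le_inv_one_sub hq.1.le hq.2 k
    _ = _ := by ring

/-- Deterministic core of Theorem 2 (convergence) of the paper: the KL divergence
`F k` contracts with factor `q = exp(-αρ_U)`, driven by the consensus-error forcing
`C (Y₁ (√λ)^(k+1) + Y₂/(k+1)^δ)` and the constant `ν`; the bound exhibits the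
asymptotic bias `ν/(1-q)` and the mixed geometric term with `max(√λ, q)`. -/
theorem stmt_2
    (q lam δ C ν Y₁ Y₂ : ℝ)
    (hq : q ∈ Set.Ioo (0:ℝ) 1) (hlam : lam ∈ Set.Ioo (0:ℝ) 1)
    (hne : Real.sqrt lam ≠ q) (hδ : δ ∈ Set.Ioo (0:ℝ) 1)
    (hC : 0 ≤ C) (hν : 0 ≤ ν) (hY₁ : 0 ≤ Y₁) (hY₂ : 0 ≤ Y₂)
    (F : ℕ → ℝ) (hF : ∀ k, 0 ≤ F k)
    (hrec : ∀ k : ℕ,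
      F (k + 1) ≤ q * F k
        + C * (Y₁ * (Real.sqrt lam) ^ (k + 1) + Y₂ / ((k : ℝ) + 1) ^ δ) + ν)
    (tbar : ℕ) (htbar : 0 < |Real.log q| - δ / ((tbar : ℝ) + 1)) :
    ∀ k : ℕ,
      F (k + 1) ≤
        (F 0 + C * Y₂ * ∑ l ∈ Finset.range tbar, q ^ (-((l : ℝ) + 1)) / ((l : ℝ) + 1) ^ δ)
            * q ^ (k + 1)
          + (C * Y₁ * Real.sqrt lam / |Real.sqrt lam - q|) * (max (Real.sqrt lam) q) ^ (k + 1)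
          + (C * Y₂ * q⁻¹ * (|Real.log q| - δ / ((tbar : ℝ) + 1))⁻¹) / ((k : ℝ) + 1) ^ δ
          + ν / (1 - q) :=
  stmt_2_general q lam δ C ν Y₁ Y₂ hq hne hδ hC hν hY₁ hY₂ F hrec tbar htbar
end

section
/- Let G be a finite simple undirected graph on n ≥ 2 vertices in which every vertex has at least one neighbor; for each edge {i,j} define p({i,j}) = (1/n)·(1/deg(i) + 1/deg(j)) and for each vertex i define p_i = (1/n)·(1 + Σ_{j ∈ N(i)} 1/deg(j)); set p_m = min_i p_i. Let L₁,…,L_n ≥ 0 with L = max_i L_i, and let u₁,…,u_n be vectors in ℝ^d. Then Σ_{edges {i,j}} p({i,j})·‖(L_i/(2p_i))·u_i + (L_j/(2p_j))·u_j‖₂² ≤ (L²/(2p_m))·Σ_{i=1}^{n} ‖u_i‖₂². -/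
/-!
By `‖x + y‖² ≤ 2‖x‖² + 2‖y‖²`, the term of the edge `{i,j}` is at most the sum of the two
dart terms `p({i,j}) · 2 (L_i/(2p_i))² ‖u_i‖²` and the same with `i, j` swapped. Grouping the darts
by their tail `v`, the weights `p({v,w})` over the neighbours `w` of `v` add up to at most `p_v`
(exactly `p_v` unless `v` is isolated), so `v` contributes at most
`2 p_v (L_v/(2p_v))² ‖u_v‖² = (L_v²/(2p_v)) ‖u_v‖² ≤ (L²/(2p_m)) ‖u_v‖²`.
-/

open Finset

namespace SimpleGraph

variable {V M : Type*} [Fintype V] (G : SimpleGraph V) [DecidableRel G.Adj]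

theorem sum_darts_eq_sum_sum_neighborFinset [AddCommMonoid M] (F : V → V → M) :
    ∑ d : G.Dart, F d.fst d.snd = ∑ v, ∑ w ∈ G.neighborFinset v, F v w := by
  have := Classical.decEq V
  rw [← sum_fiberwise univ fun d : G.Dart => d.fst]
  refine sum_congr rfl fun v _ => ?_
  rw [dart_fst_fiber, sum_image fun _ _ _ _ h => G.dartOfNeighborSet_injective v h]
  exact (sum_subtype _ (fun w => G.mem_neighborFinset v w) (F v)).symm

/-- Each edge is the image of exactly two darts, `d` and `d.symm`. -/
theorem sum_edgeFinset_le_sum_darts [AddCommMonoid M] [PartialOrder M] [IsOrderedAddMonoid M]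
    (g : Sym2 V → M) (F : V → V → M)
    (hg : ∀ d : G.Dart, g d.edge ≤ F d.fst d.snd + F d.snd d.fst) :
    ∑ e ∈ G.edgeFinset, g e ≤ ∑ d : G.Dart, F d.fst d.snd := by
  classical
  rw [← sum_fiberwise_of_maps_to (g := Dart.edge) (t := G.edgeFinset)
    fun d _ => G.mem_edgeFinset.2 d.edge_mem]
  refine sum_le_sum fun e he => ?_
  induction e with
  | _ i j =>
    let d : G.Dart := ⟨(i, j), G.mem_edgeFinset.1 he⟩
    rw [show s(i, j) = d.edge from rfl, d.edge_fiber, sum_pair d.symm_ne.symm]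
    exact hg d

theorem sum_neighborFinset_one_div_degree_add_le (v : V) (c : V → ℝ) :
    ∑ w ∈ G.neighborFinset v, (1 / (G.degree v : ℝ) + c w)
      ≤ 1 + ∑ w ∈ G.neighborFinset v, c w := by
  rw [sum_add_distrib, sum_const, card_neighborFinset_eq_degree, nsmul_eq_mul, mul_one_div]
  gcongr
  exact div_self_le_one _

end SimpleGraph

theorem norm_add_sq_le_two_mul {E : Type*} [SeminormedAddCommGroup E] (x y : E) :
    ‖x + y‖ ^ 2 ≤ 2 * (‖x‖ ^ 2 + ‖y‖ ^ 2) :=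
  (pow_le_pow_left₀ (norm_nonneg _) (norm_add_le x y) 2).trans add_sq_le

theorem norm_smul_sq {E : Type*} [SeminormedAddCommGroup E] [NormedSpace ℝ E] (a : ℝ) (x : E) :
    ‖a • x‖ ^ 2 = a ^ 2 * ‖x‖ ^ 2 := by
  rw [norm_smul, mul_pow, Real.norm_eq_abs, sq_abs]

theorem mul_two_mul_div_two_mul_sq_le {p pm L Lmax : ℝ} (hpm0 : 0 < pm) (hpm : pm ≤ p)
    (hL : 0 ≤ L) (hLmax : L ≤ Lmax) :
    p * (2 * (L / (2 * p)) ^ 2) ≤ Lmax ^ 2 / (2 * pm) := by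
  have hp : 0 < p := hpm0.trans_le hpm
  calc p * (2 * (L / (2 * p)) ^ 2) = L ^ 2 / (2 * p) := by field_simp
    _ ≤ Lmax ^ 2 / (2 * pm) := by gcongr

theorem stmt_9_general
    (n d : ℕ)
    (G : SimpleGraph (Fin n)) [DecidableRel G.Adj]
    (p : Fin n → ℝ)
    (hp : ∀ i, p i = (1 / (n : ℝ))
        * (1 + ∑ j ∈ G.neighborFinset i, 1 / (G.degree j : ℝ)))
    (pm : ℝ) (hpm0 : 0 < pm) (hpm : ∀ i, pm ≤ p i)
    (Li : Fin n → ℝ) (hLi : ∀ i, 0 ≤ Li i)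
    (Lmax : ℝ) (hLmax : ∀ i, Li i ≤ Lmax)
    (u : Fin n → EuclideanSpace ℝ (Fin d))
    (f : Sym2 (Fin n) → ℝ)
    (hf : ∀ i j : Fin n, f s(i, j) =
      (1 / (n : ℝ)) * (1 / (G.degree i : ℝ) + 1 / (G.degree j : ℝ))
        * ‖(Li i / (2 * p i)) • u i + (Li j / (2 * p j)) • u j‖ ^ 2) :
    ∑ e ∈ G.edgeFinset, f e ≤ (Lmax ^ 2 / (2 * pm)) * ∑ i, ‖u i‖ ^ 2 := by
  let ω i j : ℝ := 1 / (n : ℝ) * (1 / (G.degree i : ℝ) + 1 / (G.degree j : ℝ))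
  let c i : ℝ := 2 * (Li i / (2 * p i)) ^ 2
  let Q i j : ℝ := ω i j * (c i * ‖u i‖ ^ 2)
  have hedge (e : G.Dart) : f e.edge ≤ Q e.fst e.snd + Q e.snd e.fst :=
    calc f e.edge = ω e.fst e.snd * ‖(Li e.fst / (2 * p e.fst)) • u e.fst
          + (Li e.snd / (2 * p e.snd)) • u e.snd‖ ^ 2 := hf _ _
      _ ≤ _ := by grw [norm_add_sq_le_two_mul, norm_smul_sq, norm_smul_sq]
      _ = _ := by ring
  have hvertex (v : Fin n) :
      ∑ w ∈ G.neighborFinset v, Q v w ≤ Lmax ^ 2 / (2 * pm) * ‖u v‖ ^ 2 := by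
    have hω : ∑ w ∈ G.neighborFinset v, ω v w ≤ p v := by
      rw [hp, ← mul_sum]
      gcongr
      exact G.sum_neighborFinset_one_div_degree_add_le v _
    rw [← sum_mul, ← mul_assoc]
    gcongr
    exact (mul_le_mul_of_nonneg_right hω (by positivity)).trans
      (mul_two_mul_div_two_mul_sq_le hpm0 (hpm v) (hLi v) (hLmax v))
  calc ∑ e ∈ G.edgeFinset, f e ≤ ∑ e : G.Dart, Q e.fst e.snd :=
        G.sum_edgeFinset_le_sum_darts f Q hedge
    _ = ∑ v, ∑ w ∈ G.neighborFinset v, Q v w := G.sum_darts_eq_sum_sum_neighborFinset Q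
    _ ≤ ∑ v, Lmax ^ 2 / (2 * pm) * ‖u v‖ ^ 2 := sum_le_sum fun v _ => hvertex v
    _ = _ := (mul_sum ..).symm

/-- Key step in Lemma 3 of the paper bounding the second moment of the
consensus-induced gradient noise: with edge-activation probabilities
`p({i,j}) = (1/n)(1/deg i + 1/deg j)`, agent-activation probabilities
`p_i = (1/n)(1 + Σ_{j ∈ N(i)} 1/deg j)`, `p_m = min_i p_i` and `L = max_i L_i`,
`Σ_{edges {i,j}} p({i,j}) ‖(L_i/(2p_i)) u_i + (L_j/(2p_j)) u_j‖² ≤ (L²/(2p_m)) Σ_i ‖u_i‖²`. -/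
theorem stmt_9
    (n d : ℕ) (hn : 2 ≤ n)
    (G : SimpleGraph (Fin n)) [DecidableRel G.Adj]
    (hdeg : ∀ v : Fin n, 0 < G.degree v)
    (p : Fin n → ℝ)
    (hp : ∀ i, p i = (1 / (n : ℝ))
        * (1 + ∑ j ∈ G.neighborFinset i, 1 / (G.degree j : ℝ)))
    (pm : ℝ) (hpm0 : 0 < pm) (hpm : ∀ i, pm ≤ p i)
    (Li : Fin n → ℝ) (hLi : ∀ i, 0 ≤ Li i)
    (Lmax : ℝ) (hLmax : ∀ i, Li i ≤ Lmax)
    (u : Fin n → EuclideanSpace ℝ (Fin d))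
    (f : Sym2 (Fin n) → ℝ)
    (hf : ∀ i j : Fin n, f s(i, j) =
      (1 / (n : ℝ)) * (1 / (G.degree i : ℝ) + 1 / (G.degree j : ℝ))
        * ‖(Li i / (2 * p i)) • u i + (Li j / (2 * p j)) • u j‖ ^ 2) :
    ∑ e ∈ G.edgeFinset, f e ≤ (Lmax ^ 2 / (2 * pm)) * ∑ i, ‖u i‖ ^ 2 :=
  stmt_9_general n d G p hp pm hpm0 hpm Li hLi Lmax hLmax u f hf
end
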